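/- Set p = 2 and q = 4, and suppose v ≥ 2 and h ≥ 2. For every integer i with 1 ≤ i ≤ h, all reals c, d with 0 ≤ c, d ≤ v, and every real x with 0 ≤ x ≤ d, one has |g_i(c+x)·g_{i+1}(d−x) − exp(−(c+x)/(v³·(3 − i/h)))·exp(−(d−x)/(v³·(3 − (i+1)/h)))| ≤ 1/v⁶. -/

import Mathlib

/-! Both arguments `t = (c+x)/(v³(3 - i/h))` and `s = (d-x)/(v³(3 - (i+1)/h))` lie in `[0, 1/v²]`,
since the denominators are at least `2v³` and `v³` while the numerators are at most `2v` and `v`.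
On `[0, 1]` the Lagrange remainder gives `|T₂(-t) - e^{-t}| ≤ 2t³/9`, and both `T₂(-t)` and
`e^{-s}` have absolute value at most `1`, so the product error is at most
`2(t³ + s³)/9 ≤ 4/(9v⁶)`. -/

/-- `T p x` is the degree-`p` Taylor polynomial of the exponential function at `0`. -/
noncomputable def taylorExp (p : ℕ) (x : ℝ) : ℝ :=
  ∑ j ∈ Finset.range (p + 1), x ^ j / (Nat.factorial j : ℝ)

/-- The round reward polynomial `g_i(x) = T_p(−x/(v^{q−1}·(3 − i/h)))`. -/
noncomputable def roundPoly (v h p q : ℕ) (i : ℕ) (x : ℝ) : ℝ :=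
  taylorExp p (-(x / ((v : ℝ) ^ (q - 1) * (3 - (i : ℝ) / (h : ℝ)))))

open Real

theorem taylorExp_two (y : ℝ) : taylorExp 2 y = 1 + y + y ^ 2 / 2 := by
  simp [taylorExp, Finset.sum_range_succ, Nat.factorial]

theorem abs_exp_sub_taylorExp_le {y : ℝ} (hy : |y| ≤ 1) (p : ℕ) :
    |exp y - taylorExp p y| ≤ |y| ^ (p + 1) * ((p + 2) / ((p + 1).factorial * (p + 1))) := by
  have h := Real.exp_bound hy (Nat.succ_pos p)
  push_cast at h
  rwa [add_assoc, one_add_one_eq_two] at h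

theorem abs_taylorExp_two_neg_sub_exp_neg_le {t : ℝ} (ht0 : 0 ≤ t) (ht1 : t ≤ 1) :
    |taylorExp 2 (-t) - exp (-t)| ≤ 2 / 9 * t ^ 3 := by
  have h := abs_exp_sub_taylorExp_le (y := -t) (by rwa [abs_neg, abs_of_nonneg ht0]) 2
  rw [abs_sub_comm, abs_neg, abs_of_nonneg ht0] at h
  norm_num [Nat.factorial] at h
  linarith

theorem abs_taylorExp_two_neg_le_one {t : ℝ} (ht0 : 0 ≤ t) (ht2 : t ≤ 2) :
    |taylorExp 2 (-t)| ≤ 1 := by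
  rw [taylorExp_two, abs_le]
  constructor <;> nlinarith

theorem abs_mul_sub_mul_le_of_abs_le_one {A B a b : ℝ} (hA : |A| ≤ 1) (hb : |b| ≤ 1) :
    |A * B - a * b| ≤ |B - b| + |A - a| :=
  calc |A * B - a * b| = |A * (B - b) + (A - a) * b| := by ring_nf
    _ ≤ |A| * |B - b| + |A - a| * |b| := by
        rw [← abs_mul, ← abs_mul]; exact abs_add_le _ _
    _ ≤ 1 * |B - b| + |A - a| * 1 := by gcongr
    _ = |B - b| + |A - a| := by ring

theorem abs_taylorExp_two_mul_sub_exp_mul_le {t s : ℝ} (ht0 : 0 ≤ t) (ht1 : t ≤ 1)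
    (hs0 : 0 ≤ s) (hs1 : s ≤ 1) :
    |taylorExp 2 (-t) * taylorExp 2 (-s) - exp (-t) * exp (-s)| ≤ 2 / 9 * (t ^ 3 + s ^ 3) := by
  have hA := abs_taylorExp_two_neg_le_one ht0 (by linarith)
  have hb : |exp (-s)| ≤ 1 := by
    rw [abs_of_pos (exp_pos _), exp_le_one_iff]; linarith
  calc _ ≤ _ := abs_mul_sub_mul_le_of_abs_le_one hA hb
    _ ≤ 2 / 9 * s ^ 3 + 2 / 9 * t ^ 3 := add_le_add
        (abs_taylorExp_two_neg_sub_exp_neg_le hs0 hs1) (abs_taylorExp_two_neg_sub_exp_neg_le ht0 ht1)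
    _ = 2 / 9 * (t ^ 3 + s ^ 3) := by ring

theorem two_le_three_sub_div {i h : ℕ} (hih : i ≤ h) : 2 ≤ 3 - (i : ℝ) / h := by
  have : (i : ℝ) / h ≤ 1 := div_le_one_of_le₀ (by exact_mod_cast hih) h.cast_nonneg
  linarith

theorem one_le_three_sub_succ_div {i h : ℕ} (hih : i ≤ h) : 1 ≤ 3 - ((i : ℝ) + 1) / h := by
  rcases Nat.eq_zero_or_pos h with rfl | hh
  · simp
  · have : ((i : ℝ) + 1) / h ≤ 2 :=
      div_le_of_le_mul₀ h.cast_nonneg zero_le_two (by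
        have : (i : ℝ) + 1 ≤ h + h := by exact_mod_cast Nat.add_le_add hih hh
        linarith)
    linarith

theorem div_pow_three_mul_le_inv_sq {v r y : ℝ} (hv : 0 < v) (hr : 0 < r) (hy : y ≤ r * v) :
    y / (v ^ 3 * r) ≤ 1 / v ^ 2 := by
  rw [div_le_div_iff₀ (by positivity) (by positivity)]
  nlinarith [pow_pos hv 2]

theorem roundPoly_product_exp_approx_general (v h : ℕ) (hv : 2 ≤ v)
    (i : ℕ) (hih : i ≤ h)
    (c d : ℝ) (hc0 : 0 ≤ c) (hcv : c ≤ (v : ℝ)) (hdv : d ≤ (v : ℝ))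
    (x : ℝ) (hx0 : 0 ≤ x) (hxd : x ≤ d) :
    |roundPoly v h 2 4 i (c + x) * roundPoly v h 2 4 (i + 1) (d - x) -
        Real.exp (-((c + x) / ((v : ℝ) ^ 3 * (3 - (i : ℝ) / (h : ℝ))))) *
          Real.exp (-((d - x) / ((v : ℝ) ^ 3 * (3 - ((i : ℝ) + 1) / (h : ℝ)))))|
      ≤ 1 / (v : ℝ) ^ 6 := by
  have hv1 : (1 : ℝ) ≤ v := by exact_mod_cast one_le_two.trans hv
  have hv0 : (0 : ℝ) < v := one_pos.trans_le hv1
  have hr := two_le_three_sub_div hih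
  have hr' := one_le_three_sub_succ_div hih
  set t := (c + x) / ((v : ℝ) ^ 3 * (3 - (i : ℝ) / h))
  set s := (d - x) / ((v : ℝ) ^ 3 * (3 - ((i : ℝ) + 1) / h))
  have ht0 : 0 ≤ t := div_nonneg (by linarith) (by positivity)
  have hs0 : 0 ≤ s := div_nonneg (by linarith) (by positivity)
  have ht : t ≤ 1 / (v : ℝ) ^ 2 := div_pow_three_mul_le_inv_sq hv0 (by linarith) (by nlinarith)
  have hs : s ≤ 1 / (v : ℝ) ^ 2 := div_pow_three_mul_le_inv_sq hv0 (by linarith) (by nlinarith)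
  have hv2 : 1 / (v : ℝ) ^ 2 ≤ 1 := div_le_one_of_le₀ (one_le_pow₀ hv1) (by positivity)
  have hpoly : roundPoly v h 2 4 i (c + x) * roundPoly v h 2 4 (i + 1) (d - x) =
      taylorExp 2 (-t) * taylorExp 2 (-s) := by
    simp only [roundPoly, t, s]; push_cast; norm_num
  rw [hpoly]
  calc _ ≤ 2 / 9 * (t ^ 3 + s ^ 3) :=
        abs_taylorExp_two_mul_sub_exp_mul_le ht0 (ht.trans hv2) hs0 (hs.trans hv2)
    _ ≤ 2 / 9 * ((1 / (v : ℝ) ^ 2) ^ 3 + (1 / (v : ℝ) ^ 2) ^ 3) := by gcongr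
    _ ≤ 1 / (v : ℝ) ^ 6 := by
        rw [one_div_pow, ← pow_mul]
        linarith [show (0 : ℝ) ≤ 1 / (v : ℝ) ^ 6 by positivity]

/-- Equation (eq:topr1) for `p = 2`, `q = 4`: for `v ≥ 2`, `h ≥ 2`,
`1 ≤ i ≤ h`, reals `0 ≤ c, d ≤ v` and `0 ≤ x ≤ d`, the product
`g_i(c+x)·g_{i+1}(d−x)` is within `1/v⁶` of its exponential surrogate. -/
theorem roundPoly_product_exp_approx (v h : ℕ) (hv : 2 ≤ v) (hh : 2 ≤ h)
    (i : ℕ) (hi1 : 1 ≤ i) (hih : i ≤ h)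
    (c d : ℝ) (hc0 : 0 ≤ c) (hcv : c ≤ (v : ℝ)) (hd0 : 0 ≤ d) (hdv : d ≤ (v : ℝ))
    (x : ℝ) (hx0 : 0 ≤ x) (hxd : x ≤ d) :
    |roundPoly v h 2 4 i (c + x) * roundPoly v h 2 4 (i + 1) (d - x) -
        Real.exp (-((c + x) / ((v : ℝ) ^ 3 * (3 - (i : ℝ) / (h : ℝ))))) *
          Real.exp (-((d - x) / ((v : ℝ) ^ 3 * (3 - ((i : ℝ) + 1) / (h : ℝ)))))|
      ≤ 1 / (v : ℝ) ^ 6 :=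
  roundPoly_product_exp_approx_general v h hv i hih c d hc0 hcv hdv x hx0 hxd
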